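/- With the same setup (σ_t := (∫_0^t g² )^{1/2}, p_r a Gaussian mixture with respect to μ_data), the weighted Fisher-information-type integral ∫_ε^T g(t)² |∇p_{σ_t}(x)|² / p_{σ_t}(x) dt is bounded above by (2π)^{−d/2} ∫_{ℝ^d} Φ_{σ_ε}^{σ_T}((d+2)/2, |x−x̃|²/2) |x̃−x|² dμ_data(x̃), which in turn is bounded uniformly in x by 2(2π)^{−d/2} sup_{z≥0} [ z Φ_{σ_ε}^{σ_T}((d+2)/2, z) ] < ∞. -/

import Mathlib

open MeasureTheory Real Filter

/-- `Φ a b s z = ∫_{1/b²}^{1/a²} u^(s-1) e^{-z u} du`. -/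
noncomputable def Phi (a b s z : ℝ) : ℝ :=
  ∫ u in (1 / b ^ 2)..(1 / a ^ 2), u ^ (s - 1) * Real.exp (-z * u)

/-- `σ_t := (∫_0^t g²)^{1/2}`. -/
noncomputable def sigma (g : ℝ → ℝ) (t : ℝ) : ℝ :=
  Real.sqrt (∫ η in (0 : ℝ)..t, g η ^ 2)

/-- Gaussian mixture density `p_r(x)`. -/
noncomputable def pdens (d : ℕ) (μ : Measure (EuclideanSpace ℝ (Fin d)))
    (r : ℝ) (x : EuclideanSpace ℝ (Fin d)) : ℝ :=
  ∫ xt, (2 * Real.pi * r ^ 2) ^ (-(d : ℝ) / 2) *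
    Real.exp (-‖x - xt‖ ^ 2 / (2 * r ^ 2)) ∂μ

/-- `∇p_r(x)`. -/
noncomputable def gradP (d : ℕ) (μ : Measure (EuclideanSpace ℝ (Fin d)))
    (r : ℝ) (x : EuclideanSpace ℝ (Fin d)) : EuclideanSpace ℝ (Fin d) :=
  ∫ xt, ((2 * Real.pi * r ^ 2) ^ (-(d : ℝ) / 2) *
    Real.exp (-‖x - xt‖ ^ 2 / (2 * r ^ 2)) / r ^ 2) • (xt - x) ∂μ

/-!
By Cauchy–Schwarz for the mixing measure, `|∇p_r(x)|² / p_r(x)` is at most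
`r⁻⁴ ∫ k_r(x - x̃) |x - x̃|² dμ(x̃)`, where `k_r` is the Gaussian kernel of variance `r²`.
After exchanging the time and space integrals, the substitution `u = 1 / σ_t²` turns
`∫_ε^T g(t)² k_{σ_t}(y) |y|² / σ_t⁴ dt` into `(2π)^{-d/2} Φ((d+2)/2, |y|²/2) |y|²`; it is
legitimate because `t ↦ σ_t² = ∫_0^t g²` is absolutely continuous with derivative `g²` almost
everywhere. Finally `Φ(|y|²/2) |y|² = 2 z Φ(z)` at `z = |y|²/2`, and `z Φ(z)` is bounded because
`z e^{-zu} ≤ 1/u ≤ σ_T²` on the range of integration.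
-/

open Set

theorem LipschitzOnWith.comp_absolutelyContinuousOnInterval {X Y : Type*} [PseudoMetricSpace X]
    [PseudoMetricSpace Y] {G : X → Y} {f : ℝ → X} {K : NNReal} {s : Set X} {a b : ℝ}
    (hG : LipschitzOnWith K G s) (hf : AbsolutelyContinuousOnInterval f a b)
    (hfs : MapsTo f (uIcc a b) s) : AbsolutelyContinuousOnInterval (G ∘ f) a b := by
  have hKf := by simpa only [mul_zero] using Tendsto.const_mul (K : ℝ) hf
  refine squeeze_zero' (Eventually.of_forall fun _ => Finset.sum_nonneg fun _ _ => dist_nonneg)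
    ?_ hKf
  filter_upwards [mem_inf_of_right (mem_principal_self _)] with E hE
  rw [Finset.mul_sum]
  exact Finset.sum_le_sum fun i hi =>
    hG.dist_le_mul _ (hfs (hE.1 i hi).1) _ (hfs (hE.1 i hi).2)

theorem AbsolutelyContinuousOnInterval.integral_comp_mul_deriv {f g : ℝ → ℝ} {a b : ℝ}
    (hf : AbsolutelyContinuousOnInterval f a b) (hg : Continuous g) :
    ∫ x in a..b, g (f x) * deriv f x = ∫ y in f a..f b, g y := by
  set G : ℝ → ℝ := fun y => ∫ t in (0 : ℝ)..y, g t
  have hG : ∀ y, HasDerivAt G (g y) y := fun y => (hg.integral_hasStrictDerivAt 0 y).hasDerivAt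
  have hG_C1 : ContDiff ℝ 1 G := contDiff_one_iff_deriv.2
    ⟨fun y => (hG y).differentiableAt, by rwa [funext fun y => (hG y).deriv]⟩
  obtain ⟨K, hK⟩ := hG_C1.locallyLipschitz.locallyLipschitzOn.exists_lipschitzOnWith_of_compact
    (isCompact_uIcc.image_of_continuousOn hf.continuousOn)
  have hGf := hK.comp_absolutelyContinuousOnInterval hf (mapsTo_image f _)
  rw [← intervalIntegral.integral_interval_sub_left (hg.intervalIntegrable 0 _)
    (hg.intervalIntegrable 0 _)]
  change _ = (G ∘ f) b - (G ∘ f) a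
  rw [← hGf.integral_deriv_eq_sub]
  refine intervalIntegral.integral_congr_ae ?_
  filter_upwards [hf.ae_differentiableAt] with x hx hxab
  exact ((hG (f x)).comp x (hx (uIoc_subset_uIcc hxab)).hasDerivAt).deriv.symm

theorem AbsolutelyContinuousOnInterval.congr {X : Type*} [PseudoMetricSpace X] {f f₁ : ℝ → X}
    {a b : ℝ} (hf : AbsolutelyContinuousOnInterval f a b) (h : EqOn f f₁ (uIcc a b)) :
    AbsolutelyContinuousOnInterval f₁ a b := by
  refine hf.congr' ?_
  filter_upwards [mem_inf_of_right (mem_principal_self _)] with E hE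
  exact Finset.sum_congr rfl fun i hi => by rw [h (hE.1 i hi).1, h (hE.1 i hi).2]

theorem lipschitzOnWith_inv_Ici {m : ℝ} (hm : 0 < m) :
    LipschitzOnWith (Real.toNNReal (m ^ 2)⁻¹) (fun x : ℝ => x⁻¹) (Ici m) := by
  refine LipschitzOnWith.of_dist_le_mul fun x hx y hy => ?_
  have hx0 : 0 < x := hm.trans_le hx
  have hy0 : 0 < y := hm.trans_le hy
  rw [dist_inv_inv₀ hx0.ne' hy0.ne', Real.coe_toNNReal _ (by positivity), div_eq_inv_mul,
    Real.norm_of_nonneg hx0.le, Real.norm_of_nonneg hy0.le]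
  gcongr
  nlinarith [mem_Ici.1 hx, mem_Ici.1 hy]

theorem mul_exp_neg_mul_le_one_div (z : ℝ) {u : ℝ} (hu : 0 < u) : z * exp (-z * u) ≤ 1 / u := by
  rw [le_div_iff₀ hu, neg_mul, mul_right_comm]
  exact (Real.mul_exp_neg_le_exp_neg_one (z * u)).trans (exp_le_one_iff.2 (by norm_num))

section PhiBounds

variable {a b : ℝ} (ha : 0 < a) (hab : a ≤ b)
include ha hab

theorem one_div_sq_le_one_div_sq : 1 / b ^ 2 ≤ 1 / a ^ 2 :=
  one_div_le_one_div_of_le (by positivity) (pow_le_pow_left₀ ha.le hab 2)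

theorem Phi_nonneg (s z : ℝ) : 0 ≤ Phi a b s z := by
  refine intervalIntegral.integral_nonneg (one_div_sq_le_one_div_sq ha hab) fun u hu => ?_
  have : 0 ≤ u := le_trans (by positivity) hu.1
  positivity

theorem mul_Phi_le {s : ℝ} (hs : 1 ≤ s) {z : ℝ} (hz : 0 ≤ z) :
    z * Phi a b s z ≤ (1 / a ^ 2) ^ (s - 1) * b ^ 2 * (1 / a ^ 2 - 1 / b ^ 2) := by
  have hb : 0 < b := ha.trans_le hab
  have hab' := one_div_sq_le_one_div_sq ha hab
  have hψ : Continuous fun u : ℝ => z * (u ^ (s - 1) * exp (-z * u)) :=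
    continuous_const.mul ((Real.continuous_rpow_const (by linarith)).mul (by fun_prop))
  rw [Phi, ← intervalIntegral.integral_const_mul]
  calc _ ≤ ∫ _ in (1 / b ^ 2)..(1 / a ^ 2), (1 / a ^ 2) ^ (s - 1) * b ^ 2 := by
        refine intervalIntegral.integral_mono_on hab' (hψ.intervalIntegrable _ _)
          intervalIntegrable_const fun u hu => ?_
        have hu0 : 0 < u := lt_of_lt_of_le (by positivity) hu.1
        calc z * (u ^ (s - 1) * exp (-z * u)) = u ^ (s - 1) * (z * exp (-z * u)) := by ring
          _ ≤ (1 / a ^ 2) ^ (s - 1) * (1 / u) := by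
            gcongr
            · exact hu.2
            · exact mul_exp_neg_mul_le_one_div z hu0
          _ ≤ (1 / a ^ 2) ^ (s - 1) * b ^ 2 := by
            gcongr
            exact (one_div_le hu0 (by positivity)).2 hu.1
    _ = _ := by rw [intervalIntegral.integral_const, smul_eq_mul]; ring

theorem bddAbove_mul_Phi {s : ℝ} (hs : 1 ≤ s) :
    BddAbove ((fun z => z * Phi a b s z) '' Ici 0) :=
  ⟨_, forall_mem_image.2 fun _ hz => mul_Phi_le ha hab hs hz⟩

theorem integral_Phi_mul_le {α : Type*} [MeasurableSpace α] {ν : Measure α}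
    [IsProbabilityMeasure ν] {s : ℝ} (hs : 1 ≤ s) {q : α → ℝ} (hq : 0 ≤ q) :
    ∫ ω, Phi a b s (q ω / 2) * q ω ∂ν ≤ 2 * sSup ((fun z => z * Phi a b s z) '' Ici 0) := by
  calc _ ≤ ∫ _, 2 * sSup ((fun z => z * Phi a b s z) '' Ici 0) ∂ν :=
        integral_mono_of_nonneg (Eventually.of_forall fun ω => ?_) (integrable_const _)
          (Eventually.of_forall fun ω => ?_)
    _ = _ := by simp
  · exact mul_nonneg (Phi_nonneg ha hab _ _) (hq ω)
  · have hz : q ω / 2 ∈ Ici (0 : ℝ) := div_nonneg (hq ω) zero_le_two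
    calc Phi a b s (q ω / 2) * q ω = 2 * (q ω / 2 * Phi a b s (q ω / 2)) := by ring
      _ ≤ 2 * sSup ((fun z => z * Phi a b s z) '' Ici 0) := mul_le_mul_of_nonneg_left
          (le_csSup (bddAbove_mul_Phi ha hab hs) (mem_image_of_mem _ hz)) zero_le_two

end PhiBounds

section Variance

variable {g : ℝ → ℝ}

theorem sigma_sq {t : ℝ} (ht : 0 ≤ t) : sigma g t ^ 2 = ∫ η in (0 : ℝ)..t, g η ^ 2 :=
  Real.sq_sqrt (intervalIntegral.integral_nonneg ht fun _ _ => sq_nonneg _)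

variable (hg_int : ∀ a b, IntervalIntegrable (fun t => g t ^ 2) volume a b)
include hg_int

theorem sigma_pos (hg_pos : ∀ t, 0 < g t) {t : ℝ} (ht : 0 < t) : 0 < sigma g t :=
  Real.sqrt_pos.2 <| intervalIntegral.intervalIntegral_pos_of_pos_on
    (hg_int 0 t) (fun η _ => pow_pos (hg_pos η) 2) ht

theorem sigma_mono {s t : ℝ} (hs : 0 ≤ s) (hst : s ≤ t) : sigma g s ≤ sigma g t :=
  Real.sqrt_le_sqrt <| intervalIntegral.integral_mono_interval le_rfl hs hst
    (Eventually.of_forall fun _ => sq_nonneg _) (hg_int 0 t)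

theorem absolutelyContinuousOnInterval_one_div_sigma_sq (hg_pos : ∀ t, 0 < g t) {ε T : ℝ}
    (hε : 0 < ε) (hεT : ε ≤ T) :
    AbsolutelyContinuousOnInterval (fun t => 1 / sigma g t ^ 2) ε T := by
  have hF : AbsolutelyContinuousOnInterval (fun t => ∫ η in (0 : ℝ)..t, g η ^ 2) ε T :=
    ((hg_int 0 T).absolutelyContinuousOnInterval_intervalIntegral left_mem_uIcc).mono
      (uIcc_subset_uIcc (by simp [uIcc_of_le (hε.le.trans hεT), hε.le, hεT]) right_mem_uIcc)
  have hinv := lipschitzOnWith_inv_Ici (pow_pos (sigma_pos hg_int hg_pos hε) 2)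
  refine (hinv.comp_absolutelyContinuousOnInterval hF fun t ht => ?_).congr fun t ht => ?_
  · rw [uIcc_of_le hεT] at ht
    rw [mem_Ici, ← sigma_sq (hε.le.trans ht.1)]
    exact pow_le_pow_left₀ (Real.sqrt_nonneg _) (sigma_mono hg_int hε.le ht.1) 2
  · rw [uIcc_of_le hεT] at ht
    simp only [Function.comp_apply, one_div, sigma_sq (hε.le.trans ht.1)]

theorem ae_hasDerivAt_one_div_sigma_sq (hg_pos : ∀ t, 0 < g t) {ε T : ℝ} (hε : 0 < ε)
    (hεT : ε ≤ T) :
    ∀ᵐ t, t ∈ uIcc ε T →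
      HasDerivAt (fun t => 1 / sigma g t ^ 2) (-(g t ^ 2) / (sigma g t ^ 2) ^ 2) t := by
  filter_upwards [(hg_int 0 T).ae_hasDerivAt_integral] with t hF ht
  rw [uIcc_of_le hεT] at ht
  have ht0 : 0 < t := hε.trans_le ht.1
  have hFt := hF (by rw [uIcc_of_le (ht0.le.trans ht.2)]; exact ⟨ht0.le, ht.2⟩) 0 left_mem_uIcc
  have hFt_pos : 0 < ∫ η in (0 : ℝ)..t, g η ^ 2 :=
    sigma_sq ht0.le ▸ pow_pos (sigma_pos hg_int hg_pos ht0) 2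
  have heq : (fun t => (∫ η in (0 : ℝ)..t, g η ^ 2)⁻¹) =ᶠ[nhds t] fun t => 1 / sigma g t ^ 2 := by
    filter_upwards [Ioi_mem_nhds ht0] with s hs
    rw [one_div, sigma_sq (le_of_lt hs)]
  rw [sigma_sq ht0.le]
  exact (hFt.inv hFt_pos.ne').congr_of_eventuallyEq heq.symm

theorem Phi_sigma_eq_integral (hg_pos : ∀ t, 0 < g t) {ε T : ℝ} (hε : 0 < ε) (hεT : ε ≤ T)
    {s : ℝ} (hs : 1 ≤ s) (z : ℝ) :
    Phi (sigma g ε) (sigma g T) s z = ∫ t in ε..T, g t ^ 2 / (sigma g t ^ 2) ^ 2 *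
      ((1 / sigma g t ^ 2) ^ (s - 1) * exp (-z * (1 / sigma g t ^ 2))) := by
  have hψ : Continuous fun u : ℝ => u ^ (s - 1) * exp (-z * u) :=
    (Real.continuous_rpow_const (by linarith)).mul (by fun_prop)
  rw [Phi, intervalIntegral.integral_symm, ← (absolutelyContinuousOnInterval_one_div_sigma_sq
    hg_int hg_pos hε hεT).integral_comp_mul_deriv hψ, ← intervalIntegral.integral_neg]
  refine intervalIntegral.integral_congr_ae ?_
  filter_upwards [ae_hasDerivAt_one_div_sigma_sq hg_int hg_pos hε hεT] with t ht htεT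
  rw [(ht (uIoc_subset_uIcc htεT)).deriv]
  ring

end Variance

theorem sq_integral_mul_le_integral_mul_integral_mul_sq {α : Type*} [MeasurableSpace α]
    {μ : Measure α} {k f : α → ℝ} (hk : 0 ≤ k) (hf : 0 ≤ f) (hf_meas : AEStronglyMeasurable f μ)
    (hk_int : Integrable k μ) (hkf_int : Integrable (fun a => k a * f a ^ 2) μ) :
    (∫ a, k a * f a ∂μ) ^ 2 ≤ (∫ a, k a ∂μ) * ∫ a, k a * f a ^ 2 ∂μ := by
  have hsqrt_meas : AEStronglyMeasurable (fun a => √(k a)) μ :=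
    Real.continuous_sqrt.comp_aestronglyMeasurable hk_int.aestronglyMeasurable
  have hsq : ∀ a, √(k a) ^ 2 = k a := fun a => Real.sq_sqrt (hk a)
  have hL2_sqrt : MemLp (fun a => √(k a)) (ENNReal.ofReal 2) μ := by
    rw [ENNReal.ofReal_ofNat, memLp_two_iff_integrable_sq hsqrt_meas]
    simpa only [hsq] using hk_int
  have hL2_mul : MemLp (fun a => √(k a) * f a) (ENNReal.ofReal 2) μ := by
    rw [ENNReal.ofReal_ofNat, memLp_two_iff_integrable_sq (hsqrt_meas.fun_mul hf_meas)]
    simpa only [mul_pow, hsq] using hkf_int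
  have hHolder := integral_mul_le_Lp_mul_Lq_of_nonneg Real.HolderConjugate.two_two
    (Eventually.of_forall fun a => Real.sqrt_nonneg (k a))
    (Eventually.of_forall fun a => mul_nonneg (Real.sqrt_nonneg (k a)) (hf a)) hL2_sqrt hL2_mul
  simp only [← mul_assoc, Real.mul_self_sqrt (hk _), Real.rpow_two, mul_pow, hsq,
    ← Real.sqrt_eq_rpow, ← Real.sqrt_mul (integral_nonneg hk)] at hHolder
  refine (Real.le_sqrt (integral_nonneg fun a => mul_nonneg (hk a) (hf a)) ?_).1 hHolder
  exact mul_nonneg (integral_nonneg hk) (integral_nonneg fun a => mul_nonneg (hk a) (sq_nonneg _))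

section GaussianMixture

variable {d : ℕ}

noncomputable def gaussKernel (d : ℕ) (r : ℝ) (y : EuclideanSpace ℝ (Fin d)) : ℝ :=
  (2 * π * r ^ 2) ^ (-(d : ℝ) / 2) * exp (-‖y‖ ^ 2 / (2 * r ^ 2))

theorem gaussKernel_nonneg (r : ℝ) (y : EuclideanSpace ℝ (Fin d)) : 0 ≤ gaussKernel d r y :=
  mul_nonneg (Real.rpow_nonneg (by positivity) _) (exp_pos _).le

@[fun_prop]
theorem continuous_gaussKernel (r : ℝ) : Continuous (gaussKernel d r) := by
  unfold gaussKernel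
  fun_prop

theorem gaussKernel_le (r : ℝ) (y : EuclideanSpace ℝ (Fin d)) :
    gaussKernel d r y ≤ (2 * π * r ^ 2) ^ (-(d : ℝ) / 2) :=
  mul_le_of_le_one_right (Real.rpow_nonneg (by positivity) _)
    (exp_le_one_iff.2 (div_nonpos_of_nonpos_of_nonneg (by simp) (by positivity)))

theorem gaussKernel_mul_norm_sq_le {r : ℝ} (hr : r ≠ 0) (y : EuclideanSpace ℝ (Fin d)) :
    gaussKernel d r y * ‖y‖ ^ 2 ≤ (2 * π * r ^ 2) ^ (-(d : ℝ) / 2) * (2 * r ^ 2) := by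
  have h := mul_exp_neg_mul_le_one_div (‖y‖ ^ 2) (show 0 < 1 / (2 * r ^ 2) by positivity)
  rw [one_div_one_div, neg_mul, mul_one_div, ← neg_div] at h
  rw [gaussKernel, mul_assoc, mul_comm (exp _)]
  exact mul_le_mul_of_nonneg_left h (Real.rpow_nonneg (by positivity) _)

theorem gaussKernel_mul_norm_sq_div_le {ρ r : ℝ} (hρ : 0 < ρ) (hρr : ρ ≤ r)
    (y : EuclideanSpace ℝ (Fin d)) :
    gaussKernel d r y * ‖y‖ ^ 2 / (r ^ 2) ^ 2 ≤ 2 * (2 * π * ρ ^ 2) ^ (-(d : ℝ) / 2) / ρ ^ 2 := by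
  have hr : 0 < r := hρ.trans_le hρr
  have hρr2 : ρ ^ 2 ≤ r ^ 2 := pow_le_pow_left₀ hρ.le hρr 2
  calc _ ≤ (2 * π * r ^ 2) ^ (-(d : ℝ) / 2) * (2 * r ^ 2) / (r ^ 2) ^ 2 :=
        div_le_div_of_nonneg_right (gaussKernel_mul_norm_sq_le hr.ne' y) (by positivity)
    _ = 2 * (2 * π * r ^ 2) ^ (-(d : ℝ) / 2) / r ^ 2 := by field_simp
    _ ≤ _ := by
        gcongr 2 * ?_ / ?_
        exact Real.rpow_le_rpow_of_nonpos (by positivity) (by gcongr)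
          (by rw [neg_div]; exact neg_nonpos.2 (by positivity))

theorem gaussKernel_eq (r : ℝ) (y : EuclideanSpace ℝ (Fin d)) :
    gaussKernel d r y = (2 * π) ^ (-(d : ℝ) / 2) *
      ((1 / r ^ 2) ^ ((d : ℝ) / 2) * exp (-(‖y‖ ^ 2 / 2) * (1 / r ^ 2))) := by
  rw [gaussKernel, Real.mul_rpow (by positivity) (by positivity), one_div,
    Real.inv_rpow (by positivity), ← Real.rpow_neg (by positivity), neg_div]
  ring_nf

variable {μ : Measure (EuclideanSpace ℝ (Fin d))}

theorem pdens_eq_integral_gaussKernel (r : ℝ) (x : EuclideanSpace ℝ (Fin d)) :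
    pdens d μ r x = ∫ xt, gaussKernel d r (x - xt) ∂μ :=
  rfl

theorem gradP_eq_integral_gaussKernel (r : ℝ) (x : EuclideanSpace ℝ (Fin d)) :
    gradP d μ r x = ∫ xt, (gaussKernel d r (x - xt) / r ^ 2) • (xt - x) ∂μ :=
  rfl

variable [IsFiniteMeasure μ]

theorem integrable_gaussKernel (r : ℝ) (x : EuclideanSpace ℝ (Fin d)) :
    Integrable (fun xt => gaussKernel d r (x - xt)) μ :=
  .of_bound (by fun_prop) _ <| Eventually.of_forall fun xt => by
    rw [Real.norm_of_nonneg (gaussKernel_nonneg r _)]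
    exact gaussKernel_le r _

theorem integrable_gaussKernel_mul_norm_sq {r : ℝ} (hr : r ≠ 0) (x : EuclideanSpace ℝ (Fin d)) :
    Integrable (fun xt => gaussKernel d r (x - xt) * ‖x - xt‖ ^ 2) μ :=
  .of_bound (by fun_prop) _ <| Eventually.of_forall fun xt => by
    rw [Real.norm_of_nonneg (by positivity [gaussKernel_nonneg r (x - xt)])]
    exact gaussKernel_mul_norm_sq_le hr _

theorem norm_gradP_sq_div_pdens_le {r : ℝ} (hr : r ≠ 0) (x : EuclideanSpace ℝ (Fin d)) :
    ‖gradP d μ r x‖ ^ 2 / pdens d μ r x ≤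
      (∫ xt, gaussKernel d r (x - xt) * ‖x - xt‖ ^ 2 ∂μ) / (r ^ 2) ^ 2 := by
  have hk := fun xt => gaussKernel_nonneg (d := d) r (x - xt)
  have hgrad : ‖gradP d μ r x‖ ≤ (∫ xt, gaussKernel d r (x - xt) * ‖x - xt‖ ∂μ) / r ^ 2 := by
    rw [gradP_eq_integral_gaussKernel, ← integral_div]
    refine (norm_integral_le_integral_norm _).trans_eq
      (integral_congr_ae <| Eventually.of_forall fun xt => ?_)
    dsimp only
    rw [norm_smul, Real.norm_of_nonneg (div_nonneg (hk xt) (sq_nonneg r)), norm_sub_rev]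
    ring
  have hCS := sq_integral_mul_le_integral_mul_integral_mul_sq (μ := μ) (fun xt => hk xt)
    (fun xt => norm_nonneg (x - xt)) (by fun_prop) (integrable_gaussKernel r x)
    (integrable_gaussKernel_mul_norm_sq hr x)
  refine div_le_of_le_mul₀ (integral_nonneg hk)
    (div_nonneg (integral_nonneg fun xt => by positivity [hk xt]) (by positivity)) ?_
  calc ‖gradP d μ r x‖ ^ 2 ≤ ((∫ xt, gaussKernel d r (x - xt) * ‖x - xt‖ ∂μ) / r ^ 2) ^ 2 :=
        pow_le_pow_left₀ (norm_nonneg _) hgrad 2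
    _ ≤ _ := by
      rw [div_pow, div_mul_eq_mul_div, mul_comm _ (pdens d μ r x),
        pdens_eq_integral_gaussKernel]
      exact div_le_div_of_nonneg_right hCS (by positivity)

end GaussianMixture

section FisherInformation

variable {d : ℕ} {μ : Measure (EuclideanSpace ℝ (Fin d))} {g : ℝ → ℝ} {ε T : ℝ}
  (x : EuclideanSpace ℝ (Fin d))

theorem sq_mul_integral_gaussKernel_eq (t : ℝ) :
    g t ^ 2 * ((∫ xt, gaussKernel d (sigma g t) (x - xt) * ‖x - xt‖ ^ 2 ∂μ) / (sigma g t ^ 2) ^ 2) =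
      ∫ xt, g t ^ 2 *
        (gaussKernel d (sigma g t) (x - xt) * ‖x - xt‖ ^ 2 / (sigma g t ^ 2) ^ 2) ∂μ := by
  rw [integral_const_mul, integral_div]

variable (hg_int : ∀ a b, IntervalIntegrable (fun t => g t ^ 2) volume a b)
  (hg_pos : ∀ t, 0 < g t) (hε : 0 < ε)
include hg_int hg_pos hε

theorem integral_sq_mul_gaussKernel_mul_norm_sq_div (hεT : ε ≤ T)
    (y : EuclideanSpace ℝ (Fin d)) :
    ∫ t in ε..T, g t ^ 2 * (gaussKernel d (sigma g t) y * ‖y‖ ^ 2 / (sigma g t ^ 2) ^ 2) =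
      (2 * π) ^ (-(d : ℝ) / 2) *
        (Phi (sigma g ε) (sigma g T) (((d : ℝ) + 2) / 2) (‖y‖ ^ 2 / 2) * ‖y‖ ^ 2) := by
  rw [Phi_sigma_eq_integral hg_int hg_pos hε hεT (by linarith [(d.cast_nonneg : (0 : ℝ) ≤ d)]),
    show ((d : ℝ) + 2) / 2 - 1 = d / 2 by ring, ← intervalIntegral.integral_mul_const,
    ← intervalIntegral.integral_const_mul]
  congr 1 with t
  rw [gaussKernel_eq]
  ring

variable [IsFiniteMeasure μ]

theorem integrable_sq_mul_gaussKernel_prod :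
    Integrable (Function.uncurry fun t xt => g t ^ 2 *
        (gaussKernel d (sigma g t) (x - xt) * ‖x - xt‖ ^ 2 / (sigma g t ^ 2) ^ 2))
      ((volume.restrict (Ioc ε T)).prod μ) := by
  have hσ : Measurable (sigma g) :=
    (intervalIntegral.continuous_primitive hg_int 0).sqrt.measurable
  refine ((hg_int ε T).1.comp_fst μ).mul_bdd
    (c := 2 * (2 * π * sigma g ε ^ 2) ^ (-(d : ℝ) / 2) / sigma g ε ^ 2) ?_ ?_
  · refine Measurable.aestronglyMeasurable ?_
    unfold gaussKernel
    fun_prop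
  · filter_upwards [Measure.quasiMeasurePreserving_fst.ae (ae_restrict_mem measurableSet_Ioc)]
      with p hp
    rw [Real.norm_of_nonneg (by positivity [gaussKernel_nonneg (sigma g p.1) (x - p.2)])]
    exact gaussKernel_mul_norm_sq_div_le (sigma_pos hg_int hg_pos hε)
      (sigma_mono hg_int hε.le hp.1.le) _

theorem integral_sq_mul_integral_gaussKernel (hεT : ε ≤ T) :
    ∫ t in ε..T, g t ^ 2 *
      ((∫ xt, gaussKernel d (sigma g t) (x - xt) * ‖x - xt‖ ^ 2 ∂μ) / (sigma g t ^ 2) ^ 2) =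
    (2 * π) ^ (-(d : ℝ) / 2) * ∫ xt, Phi (sigma g ε) (sigma g T) (((d : ℝ) + 2) / 2)
      (‖x - xt‖ ^ 2 / 2) * ‖xt - x‖ ^ 2 ∂μ := by
  simp only [sq_mul_integral_gaussKernel_eq]
  rw [intervalIntegral.integral_of_le hεT,
    integral_integral_swap (integrable_sq_mul_gaussKernel_prod x hg_int hg_pos hε),
    ← integral_const_mul]
  refine integral_congr_ae (Eventually.of_forall fun xt => ?_)
  simp only [← intervalIntegral.integral_of_le hεT,
    integral_sq_mul_gaussKernel_mul_norm_sq_div hg_int hg_pos hε hεT, norm_sub_rev xt x]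

theorem integral_sq_mul_norm_gradP_sq_div_pdens_le (hεT : ε ≤ T) :
    ∫ t in ε..T, g t ^ 2 * ‖gradP d μ (sigma g t) x‖ ^ 2 / pdens d μ (sigma g t) x ≤
      ∫ t in ε..T, g t ^ 2 *
        ((∫ xt, gaussKernel d (sigma g t) (x - xt) * ‖x - xt‖ ^ 2 ∂μ) / (sigma g t ^ 2) ^ 2) := by
  have hbound_int := (integrable_sq_mul_gaussKernel_prod (μ := μ) (T := T) x hg_int hg_pos
    hε).integral_prod_left
  simp only [sq_mul_integral_gaussKernel_eq] at hbound_int ⊢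
  rw [intervalIntegral.integral_of_le hεT, intervalIntegral.integral_of_le hεT]
  refine integral_mono_of_nonneg (Eventually.of_forall fun t => ?_) hbound_int ?_
  · exact div_nonneg (by positivity)
      (integral_nonneg fun xt => gaussKernel_nonneg (sigma g t) (x - xt))
  · filter_upwards [ae_restrict_mem measurableSet_Ioc] with t ht
    rw [← sq_mul_integral_gaussKernel_eq, mul_div_assoc]
    exact mul_le_mul_of_nonneg_left
      (norm_gradP_sq_div_pdens_le (sigma_pos hg_int hg_pos (hε.trans ht.1)).ne' x) (sq_nonneg _)

end FisherInformation

/-- The weighted Fisher-information-type integral is bounded by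
`(2π)^{-d/2} ∫ Φ_{σ_ε}^{σ_T}((d+2)/2, |x-x̃|²/2)|x̃-x|² dμ(x̃)`, which is bounded
uniformly in `x` by `2 (2π)^{-d/2} sup_{z ≥ 0} [z Φ_{σ_ε}^{σ_T}((d+2)/2, z)] < ∞`. -/
theorem fisher_info_bound (d : ℕ) (μ : Measure (EuclideanSpace ℝ (Fin d)))
    [IsProbabilityMeasure μ] (g : ℝ → ℝ) (hg : Measurable g) (hgpos : ∀ t, 0 < g t)
    (hgbdd : ∃ M : ℝ, ∀ t, g t ≤ M) (ε T : ℝ) (hε : 0 < ε) (hεT : ε < T)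
    (x : EuclideanSpace ℝ (Fin d)) :
    BddAbove ((fun z : ℝ => z * Phi (sigma g ε) (sigma g T) (((d : ℝ) + 2) / 2) z) ''
      Set.Ici 0) ∧
    (∫ t in ε..T, g t ^ 2 * ‖gradP d μ (sigma g t) x‖ ^ 2 / pdens d μ (sigma g t) x)
      ≤ (2 * Real.pi) ^ (-(d : ℝ) / 2) *
        ∫ xt, Phi (sigma g ε) (sigma g T) (((d : ℝ) + 2) / 2) (‖x - xt‖ ^ 2 / 2) *
          ‖xt - x‖ ^ 2 ∂μ ∧
    (2 * Real.pi) ^ (-(d : ℝ) / 2) *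
        (∫ xt, Phi (sigma g ε) (sigma g T) (((d : ℝ) + 2) / 2) (‖x - xt‖ ^ 2 / 2) *
          ‖xt - x‖ ^ 2 ∂μ)
      ≤ 2 * (2 * Real.pi) ^ (-(d : ℝ) / 2) *
        sSup ((fun z : ℝ => z * Phi (sigma g ε) (sigma g T) (((d : ℝ) + 2) / 2) z) ''
          Set.Ici 0) := by
  obtain ⟨M, hM⟩ := hgbdd
  have hg_int : ∀ a b, IntervalIntegrable (fun t => g t ^ 2) volume a b := fun a b =>
    intervalIntegrable_iff.2 <| Measure.integrableOn_of_bounded measure_Ioc_lt_top.ne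
      (hg.pow_const 2).aestronglyMeasurable (M := M ^ 2) <| Eventually.of_forall fun t => by
        rw [Real.norm_of_nonneg (sq_nonneg _)]
        exact pow_le_pow_left₀ (hgpos t).le (hM t) 2
  have hσε := sigma_pos hg_int hgpos hε
  have hσεT := sigma_mono hg_int hε.le hεT.le
  have hs : (1 : ℝ) ≤ ((d : ℝ) + 2) / 2 := by linarith [(d.cast_nonneg : (0 : ℝ) ≤ d)]
  refine ⟨bddAbove_mul_Phi hσε hσεT hs,
    (integral_sq_mul_norm_gradP_sq_div_pdens_le x hg_int hgpos hε hεT.le).trans_eq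
      (integral_sq_mul_integral_gaussKernel x hg_int hgpos hε hεT.le), ?_⟩
  have h := integral_Phi_mul_le hσε hσεT hs (ν := μ) (q := fun xt => ‖x - xt‖ ^ 2)
    fun _ => sq_nonneg _
  simp only [norm_sub_rev x] at h ⊢
  calc _ ≤ (2 * π) ^ (-(d : ℝ) / 2) * (2 * sSup _) :=
        mul_le_mul_of_nonneg_left h (Real.rpow_nonneg (by positivity) _)
    _ = _ := by ring
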